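/- arXiv:1507.06698 — 4 statements merged into one kernel-verified Lean document; each statement's English description precedes it below -/
import Mathlib

section
/- Let T ∈ B(H) and N ∈ B(K) where H is a closed subspace of K. If P_H N|_H = T and P_H N*N|_H = T*T, then H is invariant under N and N|_H = T (i.e., N is an extension of T). -/
/-!
For `h ∈ H`, `‖N h‖² = ⟪N*N h, h⟫ = ⟪P_H N*N h, h⟫ = ⟪T*T h, h⟫ = ‖T h‖² = ‖P_H N h‖²`.
So projecting `N h` onto `H` loses no norm, and by Pythagoras `N h = P_H N h = T h`.
-/

open scoped InnerProductSpace ComplexOrder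

open ContinuousLinearMap RCLike
open scoped InnerProduct

namespace Submodule

variable {𝕜 E : Type*} [RCLike 𝕜] [NormedAddCommGroup E] [InnerProductSpace 𝕜 E]
  {U : Submodule 𝕜 E} [U.HasOrthogonalProjection]

theorem eq_of_orthogonalProjectionOnto_eq_of_norm_eq {x : E} {y : U}
    (hproj : U.orthogonalProjectionOnto x = y) (hnorm : ‖x‖ = ‖y‖) : x = y := by
  have hmem : x ∈ U := by
    rw [mem_iff_norm_starProjection, starProjection_apply, hproj, hnorm, coe_norm]
  rw [← hproj, ← starProjection_apply, starProjection_eq_self_iff.mpr hmem]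

variable {F G : Type*} [NormedAddCommGroup F] [InnerProductSpace 𝕜 F] [CompleteSpace F]
  [NormedAddCommGroup G] [InnerProductSpace 𝕜 G] [CompleteSpace G] [CompleteSpace E]
  [CompleteSpace U]

theorem norm_apply_eq_of_orthogonalProjectionOnto_adjoint_comp_self
    (A : E →L[𝕜] F) (B : U →L[𝕜] G) (u : U)
    (h : U.orthogonalProjectionOnto ((A† ∘L A) u) = (B† ∘L B) u) : ‖A u‖ = ‖B u‖ := by
  have hsq : ‖A u‖ ^ 2 = ‖B u‖ ^ 2 := calc
    ‖A u‖ ^ 2 = re ⟪(A† ∘L A) u, (u : E)⟫_𝕜 := apply_norm_sq_eq_inner_adjoint_left A u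
    _ = re ⟪U.orthogonalProjectionOnto ((A† ∘L A) u), u⟫_𝕜 := by
      rw [inner_orthogonalProjectionOnto_eq_of_mem_right]
    _ = ‖B u‖ ^ 2 := by rw [h, ← apply_norm_sq_eq_inner_adjoint_left]
  exact (sq_eq_sq₀ (norm_nonneg _) (norm_nonneg _)).mp hsq

end Submodule

/-- If `P_H N|_H = T` and `P_H N*N|_H = T*T`, then `H` is invariant under `N`
and `N` restricted to `H` equals `T`, i.e. `N` is an extension of `T`. -/
theorem normal_like_extension
    {K : Type*} [NormedAddCommGroup K] [InnerProductSpace ℂ K] [CompleteSpace K]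
    (H : Submodule ℂ K) [CompleteSpace H]
    (T : H →L[ℂ] H) (N : K →L[ℂ] K)
    (h1 : ∀ h : H, H.orthogonalProjection (N h) = T h)
    (h2 : ∀ h : H, H.orthogonalProjection ((star N) (N h)) = (star T) (T h)) :
    ∀ h : H, N h ∈ H ∧ N h = (T h : K) := by
  intro h
  have hnorm : ‖N h‖ = ‖T h‖ :=
    H.norm_apply_eq_of_orthogonalProjectionOnto_adjoint_comp_self N T h (h2 h)
  have hext : N h = T h := H.eq_of_orthogonalProjectionOnto_eq_of_norm_eq (h1 h) hnorm
  exact ⟨hext ▸ (T h).2, hext⟩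
end

section
/- Let T be a subnormal contraction on H with normal extension N, ‖N‖ ≤ 1. Then for every n ≥ 0, Σ_{j=0}^n (−1)^j C(n,j) T^{*j} T^j ≥ 0. -/
/-- A power of a positive operator is positive. -/
lemma isPositive_pow_aux {E : Type*} [NormedAddCommGroup E] [InnerProductSpace ℂ E]
    [CompleteSpace E] {A : E →L[ℂ] E} (hA : A.IsPositive) (n : ℕ) :
    (A ^ n).IsPositive := by
  rcases Nat.even_or_odd n with ⟨k, hk⟩ | ⟨k, hk⟩
  · have h1 : ((ContinuousLinearMap.adjoint (A ^ k)) ∘L (1 : E →L[ℂ] E)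
        ∘L (A ^ k)).IsPositive :=
      (ContinuousLinearMap.isPositive_one).adjoint_conj (A ^ k)
    have hsa : ContinuousLinearMap.adjoint (A ^ k) = A ^ k := hA.isSelfAdjoint.pow k
    have h2 : A ^ n = (ContinuousLinearMap.adjoint (A ^ k)) ∘L (1 : E →L[ℂ] E)
        ∘L (A ^ k) := by
      rw [hsa]; ext x
      simp [hk, pow_add, ContinuousLinearMap.mul_apply]
    rw [h2]; exact h1
  · have h1 : ((ContinuousLinearMap.adjoint (A ^ k)) ∘L A ∘L (A ^ k)).IsPositive :=
      hA.adjoint_conj (A ^ k)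
    have hsa : ContinuousLinearMap.adjoint (A ^ k) = A ^ k := hA.isSelfAdjoint.pow k
    have hk' : n = k + 1 + k := by omega
    have h2 : A ^ n = (ContinuousLinearMap.adjoint (A ^ k)) ∘L A ∘L (A ^ k) := by
      rw [hsa]; ext x
      simp [hk', pow_add, pow_succ, ContinuousLinearMap.mul_apply]
    rw [h2]; exact h1

/-- Real part of the Agler sum applied to a vector. -/
lemma aux_re {E : Type*} [NormedAddCommGroup E] [InnerProductSpace ℂ E]
    [CompleteSpace E] (n : ℕ) (f : ℕ → E →L[ℂ] E) (x : E) :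
    (∑ j ∈ Finset.range (n + 1),
      (((-1 : ℂ) ^ j) * ((n.choose j : ℕ) : ℂ)) • (star (f j) * f j)).reApplyInnerSelf x
    = ∑ j ∈ Finset.range (n + 1), (-1 : ℝ) ^ j * (n.choose j : ℝ) * ‖f j x‖ ^ 2 := by
  rw [ContinuousLinearMap.reApplyInnerSelf]
  rw [ContinuousLinearMap.sum_apply, sum_inner, map_sum]
  refine Finset.sum_congr rfl fun j hj => ?_
  rw [ContinuousLinearMap.smul_apply, inner_smul_left]
  have h1 : (star (f j) * f j) x = (ContinuousLinearMap.adjoint (f j)) (f j x) := by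
    rw [ContinuousLinearMap.mul_apply, ContinuousLinearMap.star_eq_adjoint]
  rw [h1, ContinuousLinearMap.adjoint_inner_left]
  have h2 : (starRingEnd ℂ) ((-1 : ℂ) ^ j * ((n.choose j : ℕ) : ℂ))
      = (-1 : ℂ) ^ j * ((n.choose j : ℕ) : ℂ) := by
    simp [map_mul, map_pow]
  rw [h2]
  have h3 : ((-1 : ℂ) ^ j * ((n.choose j : ℕ) : ℂ))
      = (RCLike.ofReal (((-1 : ℝ) ^ j * (n.choose j : ℝ))) : ℂ) := by norm_cast
  rw [h3, RCLike.re_ofReal_mul, inner_self_eq_norm_sq]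

set_option synthInstance.maxHeartbeats 1000000 in
set_option maxHeartbeats 1000000 in
/-- Agler's positivity condition for a subnormal contraction with a contractive normal
extension. -/
theorem agler_positivity_of_subnormal
    {K : Type*} [NormedAddCommGroup K] [InnerProductSpace ℂ K] [CompleteSpace K]
    (H : Submodule ℂ K) [CompleteSpace H]
    (T : H →L[ℂ] H) (hT : ‖T‖ ≤ 1)
    (N : K →L[ℂ] K) (hN : star N * N = N * star N) (hNc : ‖N‖ ≤ 1)
    (hext : ∀ h : H, N h = (T h : K)) :
    ∀ n : ℕ,
      (∑ j ∈ Finset.range (n + 1),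
        (((-1 : ℂ) ^ j) * (n.choose j : ℂ)) • (star (T ^ j) * T ^ j)).IsPositive := by
  intro n
  -- extension to powers
  have hpow : ∀ (j : ℕ) (h : H), (N ^ j) (h : K) = ((T ^ j) h : K) := by
    intro j
    induction j with
    | zero => intro h; simp
    | succ j ih =>
      intro h
      rw [pow_succ', pow_succ']
      simp only [ContinuousLinearMap.mul_apply]
      rw [ih h, hext]
  set A : K →L[ℂ] K := star N * N with hA
  have hApos : ((1 : K →L[ℂ] K) - A).IsPositive := by
    constructor
    · rw [← ContinuousLinearMap.isSelfAdjoint_iff_isSymmetric]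
      simp only [IsSelfAdjoint, star_sub, star_one, hA, star_mul, star_star]
    · intro x
      have hx : ‖N x‖ ≤ ‖x‖ := by
        calc ‖N x‖ ≤ ‖N‖ * ‖x‖ := N.le_opNorm x
        _ ≤ 1 * ‖x‖ := by gcongr
        _ = ‖x‖ := one_mul _
      have hst : A x = (ContinuousLinearMap.adjoint N) (N x) := by
        rw [hA, ContinuousLinearMap.mul_apply, ContinuousLinearMap.star_eq_adjoint]
      simp only [ContinuousLinearMap.reApplyInnerSelf, ContinuousLinearMap.sub_apply,
        ContinuousLinearMap.one_apply, inner_sub_left]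
      rw [hst, ContinuousLinearMap.adjoint_inner_left, map_sub,
        inner_self_eq_norm_sq, inner_self_eq_norm_sq]
      nlinarith [norm_nonneg (N x), norm_nonneg x]
  have hPpos : (((1 : K →L[ℂ] K) - A) ^ n).IsPositive := isPositive_pow_aux hApos n
  -- binomial expansion
  have hbin : ((1 : K →L[ℂ] K) - A) ^ n
      = ∑ j ∈ Finset.range (n + 1),
          (((-1 : ℂ) ^ j) * (n.choose j : ℂ)) • (star (N ^ j) * N ^ j) := by
    have hc : Commute (-A) (1 : K →L[ℂ] K) := Commute.one_right _
    have hb := hc.add_pow n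
    have h1 : (1 : K →L[ℂ] K) - A = -A + 1 := by rw [sub_eq_add_neg, add_comm]
    rw [h1, hb]
    refine Finset.sum_congr rfl fun j hj => ?_
    have hNN : A ^ j = star (N ^ j) * N ^ j := by
      have hcom : Commute (star N) N := hN
      rw [hA, hcom.mul_pow, star_pow]
    rw [one_pow, mul_one, neg_pow, ← hNN]
    have hcast : ((n.choose j : ℕ) : K →L[ℂ] K) = ((n.choose j : ℂ)) • 1 := by
      rw [← map_natCast (algebraMap ℂ (K →L[ℂ] K)), Algebra.algebraMap_eq_smul_one]
    have hneg : ((-1 : K →L[ℂ] K) ^ j) = ((-1 : ℂ) ^ j) • 1 := by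
      have h : (-1 : K →L[ℂ] K) = (-1 : ℂ) • 1 := by rw [neg_smul, one_smul]
      rw [h, smul_pow, one_pow]
    rw [hcast, hneg, smul_mul_assoc, one_mul, mul_smul_comm, mul_one, smul_smul]
    congr 1
    ring
  constructor
  · rw [← ContinuousLinearMap.isSelfAdjoint_iff_isSymmetric, IsSelfAdjoint, star_sum]
    refine Finset.sum_congr rfl fun j hj => ?_
    simp only [star_smul, star_mul, star_star]
    congr 1
    · simp [map_mul, map_pow, mul_comm]
  · intro x
    have hre := aux_re n (fun j => T ^ j) x
    rw [hre]
    have hreK := aux_re n (fun j => N ^ j) (x : K)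
    have h0 := hPpos.2 (x : K)
    rw [hbin, hreK] at h0
    have hEq : ∀ j : ℕ, ‖(N ^ j) (x : K)‖ = ‖(T ^ j) x‖ := fun j => by
      rw [hpow j x]; exact Submodule.norm_coe _
    simp only [hEq] at h0
    exact h0
end

section
/- Let P be a commutative unital semigroup, T : P → B(H) a unital contractive semigroup homomorphism, and suppose there exists a map N : P → B(K) (K ⊇ H) such that each N(p) is a normal contraction extending T(p) and {N(p)}_{p∈P} pairwise commute. Then for any p₁,...,pₙ ∈ P, the operator matrix [T(pⱼ)* T(pᵢ)]_{i,j} acting on H^n is positive semidefinite. -/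
open scoped InnerProductSpace ComplexOrder

open NormedSpace

/-- Fuglede's theorem (Rosenblum's proof): in a C*-algebra, if `a` is normal and
commutes with `b`, then `star a` commutes with `b`. -/
theorem fuglede_aux {A : Type*} [NormedRing A] [StarRing A] [CStarRing A]
    [NormedAlgebra ℂ A] [CompleteSpace A] [StarModule ℂ A]
    {a b : A} (ha : star a * a = a * star a) (hab : a * b = b * a) :
    star a * b = b * star a := by
  let +nondep : NormedAlgebra ℚ A := NormedAlgebra.restrictScalars ℚ ℂ A
  set c := star a with hc
  have hca : Commute c a := ha
  have hCab : Commute a b := hab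
  -- b commutes with exponentials of multiples of a
  have hb : ∀ w : ℂ, exp (w • a) * b = b * exp (w • a) :=
    fun w => ((hCab.smul_left w).exp_left)
  have hexp1 : ∀ w : ℂ, exp ((-w) • a) * exp (w • a) = 1 := by
    intro w
    rw [← exp_add_of_commute (((Commute.refl a).smul_left (-w)).smul_right w)]
    simp [← add_smul]
  have hmid : ∀ w : ℂ, exp ((-w) • a) * b * exp (w • a) = b := by
    intro w
    have := hb (-w)
    rw [this, mul_assoc, hexp1 w, mul_one]
  -- the entire function
  set f : ℂ → A := fun z => exp (z • c) * b * exp ((-z) • c) with hf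
  have dexp : Differentiable ℂ (fun z : ℂ => exp (z • c)) :=
    fun z => (hasDerivAt_exp_smul_const c z).differentiableAt
  have hdiff : Differentiable ℂ f :=
    ((dexp.mul_const b).mul (dexp.comp differentiable_neg))
  -- boundedness via unitaries
  have hskew1 : ∀ z : ℂ, (z • c + (-(starRingEnd ℂ z)) • a) ∈ skewAdjoint A := by
    intro z
    rw [skewAdjoint.mem_iff]
    simp [star_smul, hc, star_star, map_neg]
  have hskew2 : ∀ z : ℂ, ((starRingEnd ℂ z) • a + (-z) • c) ∈ skewAdjoint A := by
    intro z
    rw [skewAdjoint.mem_iff]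
    simp [star_smul, hc, star_star, map_neg]
  have hbound : ∀ z : ℂ, ‖f z‖ ≤ ‖b‖ := by
    intro z
    have h1 : exp (z • c) * exp ((-(starRingEnd ℂ z)) • a)
        = exp (z • c + (-(starRingEnd ℂ z)) • a) :=
      (exp_add_of_commute ((hca.smul_left z).smul_right (-(starRingEnd ℂ z)))).symm
    have h2 : exp ((starRingEnd ℂ z) • a) * exp ((-z) • c)
        = exp ((starRingEnd ℂ z) • a + (-z) • c) :=
      (exp_add_of_commute ((hca.symm.smul_left (starRingEnd ℂ z)).smul_right (-z))).symm
    have hfz : f z = exp (z • c + (-(starRingEnd ℂ z)) • a) * b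
        * exp ((starRingEnd ℂ z) • a + (-z) • c) := by
      conv_lhs => rw [hf]; rw [show b = exp ((-(starRingEnd ℂ z)) • a) * b
        * exp ((starRingEnd ℂ z) • a) from (hmid (starRingEnd ℂ z)).symm]
      rw [← h1, ← h2]
      ring_nf
      noncomm_ring
    rw [hfz, mul_assoc,
      CStarRing.norm_mem_unitary_mul _ (exp_mem_unitary_of_mem_skewAdjoint (hskew1 z)),
      CStarRing.norm_mul_mem_unitary _ (exp_mem_unitary_of_mem_skewAdjoint (hskew2 z))]
  have hbdd : Bornology.IsBounded (Set.range f) := by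
    rw [Metric.isBounded_iff_subset_closedBall 0]
    exact ⟨‖b‖, by rintro - ⟨z, rfl⟩; simpa [Metric.mem_closedBall] using hbound z⟩
  have hconst : ∀ z : ℂ, f z = b := by
    intro z
    have := hdiff.apply_eq_apply_of_bounded hbdd z 0
    simpa [hf] using this
  have hcom : ∀ z : ℂ, exp (z • c) * b = b * exp (z • c) := by
    intro z
    have h := hconst z
    have h1 : exp ((-z) • c) * exp (z • c) = 1 := by
      rw [← exp_add_of_commute (((Commute.refl c).smul_left (-z)).smul_right z)]
      simp [← add_smul]
    calc exp (z • c) * b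
        = (exp (z • c) * b * exp ((-z) • c)) * exp (z • c) := by
          rw [mul_assoc, mul_assoc, h1, mul_one]
      _ = b * exp (z • c) := by rw [show exp (z • c) * b * exp ((-z) • c) = b from h]
  -- differentiate at 0
  have d1 : HasDerivAt (fun z : ℂ => exp (z • c) * b)
      (exp ((0:ℂ) • c) * c * b) 0 :=
    (hasDerivAt_exp_smul_const c 0).mul_const b
  have d2 : HasDerivAt (fun z : ℂ => exp (z • c) * b)
      (b * (exp ((0:ℂ) • c) * c)) 0 := by
    have : (fun z : ℂ => exp (z • c) * b) = fun z : ℂ => b * exp (z • c) :=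
      funext hcom
    rw [this]
    exact ((hasDerivAt_exp_smul_const c 0).const_mul b)
  have := d1.unique d2
  simpa [zero_smul, exp_zero] using this

open scoped InnerProductSpace ComplexOrder

/-- If a unital contractive representation `T` of a commutative unital semigroup admits a
pairwise commuting family of normal contractive extensions, then every operator matrix
`[T(pⱼ)* T(pᵢ)]` is positive semidefinite. -/
theorem opMatrix_posSemidef_of_normal_extensions
    {K : Type*} [NormedAddCommGroup K] [InnerProductSpace ℂ K] [CompleteSpace K]
    {P : Type*} [CommMonoid P]
    (H : Submodule ℂ K) [CompleteSpace H]
    (T : P → H →L[ℂ] H)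
    (hT1 : T 1 = 1) (hTm : ∀ p q, T (p * q) = T p * T q) (hTc : ∀ p, ‖T p‖ ≤ 1)
    (N : P → K →L[ℂ] K)
    (hNnormal : ∀ p, star (N p) * N p = N p * star (N p))
    (hNc : ∀ p, ‖N p‖ ≤ 1)
    (hNext : ∀ p (h : H), N p h = (T p h : K))
    (hNcomm : ∀ p q, N p * N q = N q * N p) :
    ∀ (n : ℕ) (p : Fin n → P) (h : Fin n → H),
      0 ≤ ∑ i, ∑ j, ⟪h i, (star (T (p j)) * T (p i)) (h j)⟫_ℂ := by
  intro n p h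
  set b : Fin n → K := fun i => star (N (p i)) ((h i : K)) with hbdef
  have key : ∀ i j, ⟪h i, (star (T (p j)) * T (p i)) (h j)⟫_ℂ = ⟪b i, b j⟫_ℂ := by
    intro i j
    have hF : star (N (p j)) * N (p i) = N (p i) * star (N (p j)) :=
      fuglede_aux (hNnormal (p j)) (hNcomm (p j) (p i))
    calc ⟪h i, (star (T (p j)) * T (p i)) (h j)⟫_ℂ
        = ⟪h i, star (T (p j)) (T (p i) (h j))⟫_ℂ := by
          rw [ContinuousLinearMap.mul_apply]
      _ = ⟪T (p j) (h i), T (p i) (h j)⟫_ℂ := by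
          rw [ContinuousLinearMap.star_eq_adjoint, ContinuousLinearMap.adjoint_inner_right]
      _ = ⟪(T (p j) (h i) : K), (T (p i) (h j) : K)⟫_ℂ := by
          rw [Submodule.coe_inner]
      _ = ⟪N (p j) (h i : K), N (p i) (h j : K)⟫_ℂ := by
          rw [hNext, hNext]
      _ = ⟪(h i : K), (star (N (p j)) * N (p i)) ((h j : K))⟫_ℂ := by
          rw [ContinuousLinearMap.mul_apply, ContinuousLinearMap.star_eq_adjoint,
            ContinuousLinearMap.adjoint_inner_right]
      _ = ⟪(h i : K), N (p i) (star (N (p j)) ((h j : K)))⟫_ℂ := by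
          rw [hF, ContinuousLinearMap.mul_apply]
      _ = ⟪b i, b j⟫_ℂ := by
          rw [hbdef]
          simp only [ContinuousLinearMap.star_eq_adjoint]
          rw [ContinuousLinearMap.adjoint_inner_left]
  simp only [key]
  have : ∑ i, ∑ j, ⟪b i, b j⟫_ℂ = ⟪∑ i, b i, ∑ j, b j⟫_ℂ := by
    simp_rw [← inner_sum, sum_inner]
  rw [this, inner_self_eq_norm_sq_to_K]
  norm_cast
  positivity
end

section
/- Let P be a commutative unital semigroup and Q = P × P the associated involution semigroup with (p,q)* = (q,p). Let T : P → B(H) be a unital contractive representation admitting a commuting family of normal contractive extensions {N(p)}_{p∈P} on K ⊇ H. Define T̃ : Q → B(H) by T̃(p,q) = T(p)* T(q). Then for any elements s₁,...,sₙ ∈ Q, the operator matrix [T̃(sᵢ* sⱼ)] is positive semidefinite. -/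
open scoped InnerProductSpace ComplexOrder

/-!
By Fuglede's theorem each `N(p)*` commutes with every `N(q)`, so all the operators `N(p)`, `N(p)*`
commute. Since `T(p q) = N(p) N(q)` on `H`, the entry `⟪hᵢ, T̃(sᵢ* sⱼ) hⱼ⟫` can be regrouped as
`⟪vᵢ, vⱼ⟫` with `vᵢ = N(pᵢ)* N(qᵢ) hᵢ`, and a Gram matrix is positive semidefinite.
-/

theorem sum_sum_inner_nonneg {𝕜 E ι : Type*} [RCLike 𝕜] [NormedAddCommGroup E]
    [InnerProductSpace 𝕜 E] [Fintype ι] (v : ι → E) :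
    0 ≤ ∑ i, ∑ j, ⟪v i, v j⟫_𝕜 := by
  have hgram : ∑ i, ∑ j, ⟪v i, v j⟫_𝕜 = ⟪∑ i, v i, ∑ j, v j⟫_𝕜 := by
    simp_rw [sum_inner, inner_sum]
  rw [hgram, inner_self_eq_norm_sq_to_K, ← RCLike.ofReal_pow, RCLike.ofReal_nonneg]
  positivity

theorem star_mul_mul_mul_eq_of_commute {R : Type*} [Monoid R] [StarMul R] {a b c d : R}
    (hab : Commute a b) (hbc : Commute (star b) c) :
    star (a * b) * (c * d) = star (star c * a) * (star b * d) := by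
  have key : Commute (star b) (star a * c) := hab.star_star.symm.mul_right hbc
  simp only [star_mul, star_star, ← mul_assoc]
  rw [← key.eq, ← mul_assoc]

namespace ContinuousLinearMap

variable {𝕜 E : Type*} [RCLike 𝕜] [NormedAddCommGroup E] [InnerProductSpace 𝕜 E] [CompleteSpace E]

theorem inner_apply_apply_eq_inner_star_mul (A B : E →L[𝕜] E) (x y : E) :
    ⟪A x, B y⟫_𝕜 = ⟪x, (star A * B) y⟫_𝕜 := by
  rw [star_eq_adjoint]
  exact (adjoint_inner_right A x (B y)).symm

theorem inner_mul_apply_mul_apply_eq {a b c d : E →L[𝕜] E}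
    (hab : Commute a b) (hbc : Commute (star b) c) (x y : E) :
    ⟪(a * b) x, (c * d) y⟫_𝕜 = ⟪(star c * a) x, (star b * d) y⟫_𝕜 := by
  rw [inner_apply_apply_eq_inner_star_mul, inner_apply_apply_eq_inner_star_mul,
    star_mul_mul_mul_eq_of_commute hab hbc]

end ContinuousLinearMap

/-- Writing `sᵢ = (pᵢ, qᵢ)`, one has `sᵢ* sⱼ = (qᵢ pⱼ, pᵢ qⱼ)`, so `T̃(sᵢ* sⱼ) = T(qᵢ pⱼ)* T(pᵢ qⱼ)`;
positivity of the operator matrix is stated through its quadratic form on `Hⁿ`. -/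
theorem tilde_opMatrix_posSemidef_general
    {K : Type*} [NormedAddCommGroup K] [InnerProductSpace ℂ K] [CompleteSpace K]
    {P : Type*} [CommMonoid P]
    (H : Submodule ℂ K) [CompleteSpace H]
    (T : P → H →L[ℂ] H)
    (hTm : ∀ p q, T (p * q) = T p * T q)
    (N : P → K →L[ℂ] K)
    (hNnormal : ∀ p, star (N p) * N p = N p * star (N p))
    (hNext : ∀ p (h : H), N p h = (T p h : K))
    (hNcomm : ∀ p q, N p * N q = N q * N p) :
    ∀ (n : ℕ) (s : Fin n → P × P) (h : Fin n → H),
      0 ≤ ∑ i, ∑ j,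
        ⟪h i, (star (T ((s i).2 * (s j).1)) * T ((s i).1 * (s j).2)) (h j)⟫_ℂ := by
  intro n s h
  have fuglede : ∀ p q, Commute (star (N p)) (N q) := fun p q =>
    IsStarNormal.commute_star_left ⟨hNnormal p⟩ (hNcomm p q)
  have hTN : ∀ p q (x : H), (T (p * q) x : K) = (N p * N q) x := fun p q x => by
    rw [hTm]
    exact (hNext p (T q x)).symm.trans (congrArg (N p) (hNext q x).symm)
  let v : Fin n → K := fun i => (star (N (s i).1) * N (s i).2) (h i)
  have hentry : ∀ i j,
      ⟪h i, (star (T ((s i).2 * (s j).1)) * T ((s i).1 * (s j).2)) (h j)⟫_ℂ = ⟪v i, v j⟫_ℂ := by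
    intro i j
    calc _ = ⟪T ((s i).2 * (s j).1) (h i), T ((s i).1 * (s j).2) (h j)⟫_ℂ :=
          (ContinuousLinearMap.inner_apply_apply_eq_inner_star_mul _ _ _ _).symm
      _ = ⟪(N (s i).2 * N (s j).1) (h i), (N (s i).1 * N (s j).2) (h j)⟫_ℂ := by
          rw [← hTN, ← hTN]
          rfl
      _ = ⟪v i, v j⟫_ℂ :=
          ContinuousLinearMap.inner_mul_apply_mul_apply_eq (hNcomm _ _) (fuglede _ _) _ _
  simp_rw [hentry]
  exact sum_sum_inner_nonneg v

/-- For `T̃(p,q) = T(p)* T(q)` on the involution semigroup `Q = P × P` with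
`(p,q)* = (q,p)`, the operator matrix `[T̃(sᵢ* sⱼ)]` is positive semidefinite whenever `T`
admits a commuting family of normal contractive extensions. Writing `sᵢ = (pᵢ, qᵢ)`, one has
`sᵢ* sⱼ = (qᵢ pⱼ, pᵢ qⱼ)` so that `T̃(sᵢ* sⱼ) = T(qᵢ pⱼ)* T(pᵢ qⱼ)`. -/
theorem tilde_opMatrix_posSemidef
    {K : Type*} [NormedAddCommGroup K] [InnerProductSpace ℂ K] [CompleteSpace K]
    {P : Type*} [CommMonoid P]
    (H : Submodule ℂ K) [CompleteSpace H]
    (T : P → H →L[ℂ] H)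
    (hT1 : T 1 = 1) (hTm : ∀ p q, T (p * q) = T p * T q) (hTc : ∀ p, ‖T p‖ ≤ 1)
    (N : P → K →L[ℂ] K)
    (hNnormal : ∀ p, star (N p) * N p = N p * star (N p))
    (hNc : ∀ p, ‖N p‖ ≤ 1)
    (hNext : ∀ p (h : H), N p h = (T p h : K))
    (hNcomm : ∀ p q, N p * N q = N q * N p) :
    ∀ (n : ℕ) (s : Fin n → P × P) (h : Fin n → H),
      0 ≤ ∑ i, ∑ j,
        ⟪h i, (star (T ((s i).2 * (s j).1)) * T ((s i).1 * (s j).2)) (h j)⟫_ℂ :=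
  tilde_opMatrix_posSemidef_general H T hTm N hNnormal hNext hNcomm
end
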